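/- Let 0 < p < 1/2, let (U^n,V^n) ~ DSBS(p)^⊗n on {0,1}^n × {0,1}^n, and let f,g : {0,1}^n → {0,1}^n be functions such that (X^n,Y^n) = (f(U^n), g(V^n)) has joint pmf exactly DSBS(p)^⊗n. Then f = g, and f is a signed coordinate permutation: there exist a permutation σ of {1,…,n} and b ∈ {0,1}^n such that f(u^n)_i = u_{σ(i)} ⊕ b_i for all u^n and all i. -/

import Mathlib

/-!
Every pair `(x, y)` has positive DSBS probability, so `f` and `g` are onto, hence bijections of
`{0,1}^n`, and the hypothesis then reads `P (f u) (g v) = P u v` for the product pmf `P`. Since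
`P u v = ((1 - p) / 2)^n * (p / (1 - p))^d(u, v)` with `p / (1 - p) < 1`, this says
`d(f u, g v) = d(u, v)` for the Hamming distance `d`. Taking `u = v` gives `f = g`, so `f` is a
Hamming isometry. After a translation it fixes `0`; it then maps unit vectors `e_j` to unit vectors
`e_(τ j)`, and since `x j = 1` iff `d(x, e_j) < d(x, 0)`, it permutes coordinates along `τ`.
-/

open Finset

/-- The pmf of one DSBS(p) pair on `{0,1}` (encoded by `Bool`). -/
noncomputable def dsbsPair (p : ℝ) (uv : Bool × Bool) : ℝ :=
  if uv.1 = uv.2 then (1 - p) / 2 else p / 2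

section DSBS

variable {ι : Type*} [Fintype ι]

noncomputable def dsbsPmf (p : ℝ) (a b : ι → Bool) : ℝ := ∏ i, dsbsPair p (a i, b i)

lemma dsbsPair_pos {p : ℝ} (hp0 : 0 < p) (hp1 : p < 1) (uv : Bool × Bool) :
    0 < dsbsPair p uv := by
  unfold dsbsPair; split_ifs <;> linarith

lemma dsbsPmf_pos {p : ℝ} (hp0 : 0 < p) (hp1 : p < 1) (a b : ι → Bool) :
    0 < dsbsPmf p a b :=
  prod_pos fun _ _ => dsbsPair_pos hp0 hp1 _

lemma dsbsPair_eq_mul_pow {p : ℝ} (hp1 : p ≠ 1) (a b : Bool) :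
    dsbsPair p (a, b) = (1 - p) / 2 * (p / (1 - p)) ^ (if a = b then 0 else 1) := by
  have : 1 - p ≠ 0 := sub_ne_zero.mpr hp1.symm
  unfold dsbsPair; split_ifs <;> field_simp

lemma dsbsPmf_eq_mul_pow_hammingDist {p : ℝ} (hp1 : p ≠ 1) (a b : ι → Bool) :
    dsbsPmf p a b = ((1 - p) / 2) ^ Fintype.card ι * (p / (1 - p)) ^ hammingDist a b := by
  have hdist : ∑ i, (if a i = b i then 0 else 1) = hammingDist a b := by
    simp only [hammingDist, card_filter, ne_eq, ite_not]
  simp only [dsbsPmf, dsbsPair_eq_mul_pow hp1, prod_mul_distrib, prod_const, card_univ,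
    prod_pow_eq_pow_sum, hdist]

lemma hammingDist_eq_of_dsbsPmf_eq {p : ℝ} (hp0 : 0 < p) (hp : p < 1 / 2) {a b c d : ι → Bool}
    (h : dsbsPmf p a b = dsbsPmf p c d) : hammingDist a b = hammingDist c d := by
  have hp1 : p ≠ 1 := by linarith
  rw [dsbsPmf_eq_mul_pow_hammingDist hp1, dsbsPmf_eq_mul_pow_hammingDist hp1] at h
  refine pow_right_injective₀ (a := p / (1 - p)) (by apply div_pos <;> linarith) ?_
    (mul_left_cancel₀ (pow_ne_zero _ (by linarith)) h)
  rw [ne_eq, div_eq_one_iff_eq (by linarith)]; linarith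

end DSBS

section JointLaw

variable {α β γ δ : Type*} [Fintype α] [Fintype β] [DecidableEq γ] [DecidableEq δ]

def jointLaw (P : α → β → ℝ) (f : α → γ) (g : β → δ) (x : γ) (y : δ) : ℝ :=
  ∑ u, ∑ v, P u v * (if f u = x then 1 else 0) * (if g v = y then 1 else 0)

lemma mem_range_of_jointLaw_ne_zero {P : α → β → ℝ} {f : α → γ} {g : β → δ} {x : γ} {y : δ}
    (h : jointLaw P f g x y ≠ 0) : x ∈ Set.range f ∧ y ∈ Set.range g := by
  obtain ⟨u, -, hu⟩ := exists_ne_zero_of_sum_ne_zero h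
  obtain ⟨v, -, huv⟩ := exists_ne_zero_of_sum_ne_zero hu
  simp only [ne_eq, mul_eq_zero, ite_eq_right_iff, one_ne_zero, imp_false, not_or,
    not_not] at huv
  exact ⟨⟨u, huv.1.2⟩, ⟨v, huv.2⟩⟩

lemma jointLaw_apply_apply (P : α → β → ℝ) {f : α → γ} {g : β → δ} (hf : Function.Injective f)
    (hg : Function.Injective g) (u : α) (v : β) : jointLaw P f g (f u) (g v) = P u v := by
  classical
  simp only [jointLaw, hf.eq_iff, hg.eq_iff, mul_ite, mul_one, mul_zero, sum_ite_eq', mem_univ,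
    if_true]

end JointLaw

lemma apply_apply_eq_of_jointLaw_eq {α : Type*} [Fintype α] [DecidableEq α] {P : α → α → ℝ}
    (hP : ∀ x y, P x y ≠ 0) {f g : α → α} (h : ∀ x y, jointLaw P f g x y = P x y) (u v : α) :
    P (f u) (g v) = P u v := by
  have hrange x y := mem_range_of_jointLaw_ne_zero ((h x y).trans_ne (hP x y))
  have hf : Function.Injective f :=
    Finite.injective_iff_surjective.mpr fun x => (hrange x x).1
  have hg : Function.Injective g :=
    Finite.injective_iff_surjective.mpr fun y => (hrange y y).2
  rw [← h, jointLaw_apply_apply P hf hg]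

section HammingIsometry

variable {ι : Type*} [DecidableEq ι]

def unitVec (j : ι) : ι → Bool := fun k => decide (k = j)

lemma unitVec_injective : Function.Injective (unitVec : ι → ι → Bool) := fun i j h => by
  simpa [unitVec] using congrFun h i

variable [Fintype ι]

lemma hammingDist_unitVec_false (j : ι) : hammingDist (unitVec j) (fun _ => false) = 1 := by
  simp [hammingDist, unitVec, filter_eq']

lemma exists_eq_unitVec_of_hammingDist_false_eq_one {x : ι → Bool}
    (h : hammingDist x (fun _ => false) = 1) : ∃ j, x = unitVec j := by
  obtain ⟨j, hj⟩ := card_eq_one.mp h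
  refine ⟨j, funext fun k => ?_⟩
  rw [unitVec, Bool.eq_iff_iff, decide_eq_true_iff]
  simpa using Finset.ext_iff.mp hj k

lemma hammingDist_unitVec_lt_iff (x : ι → Bool) (j : ι) :
    hammingDist x (unitVec j) < hammingDist x (fun _ => false) ↔ x j = true := by
  dsimp only [hammingDist]
  cases hx : x j
  · have hS : univ.filter (fun i => x i ≠ unitVec j i) =
        insert j (univ.filter fun i => x i ≠ false) := by
      ext i
      simp only [mem_filter, mem_insert, mem_univ, true_and]
      by_cases hi : i = j <;> simp [unitVec, hi, hx]
    rw [hS, card_insert_of_notMem (by simp [hx])]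
    simp
  · have hS : univ.filter (fun i => x i ≠ unitVec j i) =
        (univ.filter fun i => x i ≠ false).erase j := by
      ext i
      simp only [mem_filter, mem_erase, mem_univ, true_and]
      by_cases hi : i = j <;> simp [unitVec, hi, hx]
    rw [hS, card_erase_of_mem (by simp [hx])]
    simpa using card_pos.mpr ⟨j, by simp [hx]⟩

lemma exists_perm_of_isometry_of_map_false {F : (ι → Bool) → ι → Bool}
    (hF : ∀ x y, hammingDist (F x) (F y) = hammingDist x y)
    (h0 : F (fun _ => false) = fun _ => false) :
    ∃ σ : Equiv.Perm ι, ∀ x i, F x i = x (σ i) := by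
  choose τ hτ using fun j => exists_eq_unitVec_of_hammingDist_false_eq_one
    (x := F (unitVec j)) (by rw [← h0, hF, hammingDist_unitVec_false])
  have hτinj : Function.Injective τ := fun i j hij => by
    apply unitVec_injective
    rw [← hammingDist_eq_zero, ← hF, hτ, hτ, hij, hammingDist_self]
  have hFτ x j : F x (τ j) = x j := by
    rw [Bool.eq_iff_iff, ← hammingDist_unitVec_lt_iff, ← hτ, ← h0, hF, hF,
      hammingDist_unitVec_lt_iff]
  let e := Equiv.ofBijective τ (Finite.injective_iff_bijective.mp hτinj)
  refine ⟨e.symm, fun x i => ?_⟩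
  rw [← hFτ x, show τ (e.symm i) = i from e.apply_symm_apply i]

theorem exists_perm_xor_of_isometry {F : (ι → Bool) → ι → Bool}
    (hF : ∀ x y, hammingDist (F x) (F y) = hammingDist x y) :
    ∃ (σ : Equiv.Perm ι) (b : ι → Bool), ∀ x i, F x i = xor (x (σ i)) (b i) := by
  set b := F fun _ => false
  have hG x y : hammingDist (fun i => xor (F x i) (b i)) (fun i => xor (F y i) (b i)) =
      hammingDist x y := by
    rw [hammingDist_comp (fun i c => xor c (b i)) fun i _ _ => Bool.xor_left_inj.mp, hF]
  obtain ⟨σ, hσ⟩ := exists_perm_of_isometry_of_map_false hG (by simp [b])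
  exact ⟨σ, b, fun x i => by rw [← hσ x i, Bool.xor_assoc, Bool.xor_self, Bool.xor_false]⟩

end HammingIsometry

/-- if `(f(U^n), g(V^n))` is distributed exactly as `DSBS(p)^{⊗n}` when
`(U^n,V^n) ~ DSBS(p)^{⊗n}` with `0 < p < 1/2`, then `f = g` and `f` is a signed
coordinate permutation. -/
theorem stmt7 (p : ℝ) (hp0 : 0 < p) (hp : p < 1 / 2) (n : ℕ)
    (f g : (Fin n → Bool) → (Fin n → Bool))
    (h : ∀ x y : Fin n → Bool,
      (∑ u : Fin n → Bool, ∑ v : Fin n → Bool,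
          (∏ i, dsbsPair p (u i, v i)) * (if f u = x then (1:ℝ) else 0) *
            (if g v = y then (1:ℝ) else 0))
        = ∏ i, dsbsPair p (x i, y i)) :
    f = g ∧ ∃ (σ : Equiv.Perm (Fin n)) (b : Fin n → Bool),
      ∀ (u : Fin n → Bool) (i : Fin n), f u i = xor (u (σ i)) (b i) := by
  have hlaw : ∀ x y, jointLaw (dsbsPmf p) f g x y = dsbsPmf p x y := h
  have hpos (x y : Fin n → Bool) : dsbsPmf p x y ≠ 0 := (dsbsPmf_pos hp0 (by linarith) x y).ne'
  have hdist u v : hammingDist (f u) (g v) = hammingDist u v :=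
    hammingDist_eq_of_dsbsPmf_eq hp0 hp (apply_apply_eq_of_jointLaw_eq hpos hlaw u v)
  have hfg : f = g :=
    funext fun u => hammingDist_eq_zero.mp ((hdist u u).trans (hammingDist_self u))
  subst hfg
  exact ⟨rfl, exists_perm_xor_of_isometry hdist⟩
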